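/- arXiv:1204.4621 — 9 statements merged into one kernel-verified Lean document; each statement's English description precedes it below -/
import Mathlib

section
/- Every infinite-dimensional Banach space contains a closed subspace Y such that both Y and the quotient X/Y are infinite-dimensional (i.e., a half-space). -/
/-!
Choose a biorthogonal sequence `fₘ (eₙ) = δₘₙ` one pair at a time: the common kernel of finitely
many functionals has finite codimension, so it is not contained in the finite-dimensional span of
the vectors chosen so far, and Hahn–Banach gives a functional that is `1` on a new vector from that
kernel and vanishes on that span. Then `Y = ⋂_{n even} ker fₙ` is closed and contains the
independent vectors `eₙ` with `n` odd, while the `fₙ` with `n` even descend to `X ⧸ Y`, where they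
are biorthogonal to the classes of the `eₙ` with `n` even.
-/

open Submodule LinearMap

section Biorthogonal

variable {R M ι : Type*} [Ring R] [AddCommGroup M] [Module R M] [DecidableEq ι]
  {e : ι → M} {f : ι → Module.Dual R M}

theorem linearIndependent_of_biorthogonal (h : ∀ i j, f i (e j) = if i = j then 1 else 0) :
    LinearIndependent R e := by
  refine linearIndependent_iff.mpr fun l hl ↦ l.ext fun i ↦ ?_
  simpa [Finsupp.linearCombination_apply, Finsupp.sum, h] using congr_arg (f i) hl

variable [StrongRankCondition R]

theorem not_finite_iInf_ker_of_biorthogonal (h : ∀ i j, f i (e j) = if i = j then 1 else 0)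
    {S : Set ι} (hS : Sᶜ.Infinite) :
    ¬ Module.Finite R ↥(⨅ i ∈ S, ker (f i)) := by
  have hmem (j : ↥Sᶜ) : e j ∈ ⨅ i ∈ S, ker (f i) := by
    simp only [mem_iInf, mem_ker, h]
    exact fun i hi ↦ if_neg (by rintro rfl; exact j.2 hi)
  have : Infinite ↥Sᶜ := hS.to_subtype
  intro _
  refine Module.Finite.not_linearIndependent_of_infinite (R := R)
    (fun j : ↥Sᶜ ↦ (⟨e j, hmem j⟩ : ↥(⨅ i ∈ S, ker (f i)))) ?_
  exact linearIndependent_of_biorthogonal (f := fun i : ↥Sᶜ ↦ (f i).domRestrict _) fun i j ↦ by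
    simp [h, Subtype.ext_iff]

theorem not_finite_quotient_iInf_ker_of_biorthogonal
    (h : ∀ i j, f i (e j) = if i = j then 1 else 0) {S : Set ι} (hS : S.Infinite) :
    ¬ Module.Finite R (M ⧸ ⨅ i ∈ S, ker (f i)) := by
  have : Infinite ↥S := hS.to_subtype
  intro _
  refine Module.Finite.not_linearIndependent_of_infinite (R := R)
    (fun j : S ↦ (⨅ i ∈ S, ker (f i)).mkQ (e j)) ?_
  refine linearIndependent_of_biorthogonal
    (f := fun i : S ↦ liftQ _ (f i) (biInf_le (fun i ↦ ker (f i)) i.2)) fun i j ↦ ?_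
  simp [h, Subtype.ext_iff]

end Biorthogonal

theorem LinearMap.not_ker_le_of_not_finite {R M N : Type*} [Ring R] [AddCommGroup M]
    [Module R M] [AddCommGroup N] [Module R N] [IsNoetherian R N] (hM : ¬ Module.Finite R M)
    (φ : M →ₗ[R] N) (K : Submodule R M) [Module.Finite R K] : ¬ ker φ ≤ K := fun hle ↦
  have : K.CoFG := (CoFG.ker φ).of_le hle
  hM (Module.Finite.of_submodule_quotient K)

theorem Submodule.exists_strongDual_eq_one_of_notMem {𝕜 X : Type*} [RCLike 𝕜]
    [NormedAddCommGroup X] [NormedSpace 𝕜 X] (K : Submodule 𝕜 X) [FiniteDimensional 𝕜 K] {x : X}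
    (hx : x ∉ K) :
    ∃ g : StrongDual 𝕜 X, g x = 1 ∧ ∀ y ∈ K, g y = 0 := by
  have : IsClosed (K : Set X) := K.closed_of_finiteDimensional
  obtain ⟨g, hg⟩ := SeparatingDual.exists_eq_one (R := 𝕜) (x := K.mkQ x) (by simpa using hx)
  exact ⟨g.comp K.mkQL, by simpa using hg, fun y hy ↦ by simp [(Quotient.mk_eq_zero K).2 hy]⟩

theorem exists_biorthogonal_seq {𝕜 X : Type*} [RCLike 𝕜] [NormedAddCommGroup X]
    [NormedSpace 𝕜 X] (hX : ¬ FiniteDimensional 𝕜 X) :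
    ∃ (e : ℕ → X) (f : ℕ → StrongDual 𝕜 X), ∀ m n, f m (e n) = if m = n then 1 else 0 := by
  obtain ⟨p, hP, hr⟩ := exists_seq_of_forall_finset_exists
    (fun p : X × StrongDual 𝕜 X ↦ p.2 p.1 = 1) (fun p q ↦ p.2 q.1 = 0 ∧ q.2 p.1 = 0) fun s _ ↦ by
      let K := span 𝕜 (Prod.fst '' (s : Set (X × StrongDual 𝕜 X)))
      have : FiniteDimensional 𝕜 K := FiniteDimensional.span_of_finite 𝕜 (s.finite_toSet.image _)
      let φ : X →ₗ[𝕜] s → 𝕜 := LinearMap.pi fun q ↦ (q.1.2 : X →ₗ[𝕜] 𝕜)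
      obtain ⟨x, hxφ, hxK⟩ := SetLike.not_le_iff_exists.1 (φ.not_ker_le_of_not_finite hX K)
      obtain ⟨g, hgx, hgK⟩ := K.exists_strongDual_eq_one_of_notMem hxK
      refine ⟨(x, g), hgx, fun q hq ↦ ⟨congr_fun hxφ ⟨q, hq⟩, hgK _ (subset_span ⟨q, hq, rfl⟩)⟩⟩
  refine ⟨fun n ↦ (p n).1, fun n ↦ (p n).2, fun m n ↦ ?_⟩
  rcases lt_trichotomy m n with hmn | rfl | hnm
  · simp [(hr m n hmn).1, hmn.ne]
  · simp [hP]
  · simp [(hr n m hnm).2, hnm.ne']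

theorem every_infinite_dim_banach_has_half_space_general
    (X : Type*) [NormedAddCommGroup X] [NormedSpace ℂ X]
    (hX : ¬ FiniteDimensional ℂ X) :
    ∃ Y : Submodule ℂ X, IsClosed (Y : Set X) ∧
      ¬ FiniteDimensional ℂ Y ∧ ¬ FiniteDimensional ℂ (X ⧸ Y) := by
  obtain ⟨e, f, h⟩ := exists_biorthogonal_seq hX
  let S : Set ℕ := {n | Even n}
  have hS : S.Infinite := Set.infinite_of_forall_exists_gt fun n ↦
    ⟨2 * n + 2, by simp [S, parity_simps], by omega⟩
  have hSc : Sᶜ.Infinite := Set.infinite_of_forall_exists_gt fun n ↦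
    ⟨2 * n + 1, by simp [S, parity_simps], by omega⟩
  refine ⟨⨅ n ∈ S, ker (f n : Module.Dual ℂ X), ?_, not_finite_iInf_ker_of_biorthogonal h hSc,
    not_finite_quotient_iInf_ker_of_biorthogonal h hS⟩
  simpa [Submodule.coe_iInf] using isClosed_biInter fun n (_ : n ∈ S) ↦ (f n).isClosed_ker

/-- Every infinite-dimensional Banach space contains a half-space: a closed
subspace `Y` with both `Y` and `X ⧸ Y` infinite-dimensional. -/
theorem every_infinite_dim_banach_has_half_space
    (X : Type*) [NormedAddCommGroup X] [NormedSpace ℂ X] [CompleteSpace X]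
    (hX : ¬ FiniteDimensional ℂ X) :
    ∃ Y : Submodule ℂ X, IsClosed (Y : Set X) ∧
      ¬ FiniteDimensional ℂ Y ∧ ¬ FiniteDimensional ℂ (X ⧸ Y) :=
  every_infinite_dim_banach_has_half_space_general X hX
end

section
/- Let (x_n) be a sequence in a Banach space X. Then x_n ∉ closure(span{x_k : k ≠ n}) holds for all n if and only if x_n ∉ closure(span{x_k : k > n}) holds for all n. -/
/-!
The span of `x 0, …, x (n - 1)` is finite-dimensional, so its sum with the closed span of the
tail after `n` is closed. Hence if `x n` lies in the closed span of the other terms, then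
`x n = ∑_{j < n} c_j • x j + t` with `t` in the closed span of the tail after `n`. If all `c_j`
vanish, `x n` lies in the closed span of its own tail; otherwise, for the least `j` with
`c_j ≠ 0`, every other term of the identity lies in the closed span of the tail after `j`,
and so does `x j`.
-/

open Set Submodule

noncomputable def closedTailSpan (𝕜 : Type*) {E : Type*} [Semiring 𝕜] [AddCommMonoid E]
    [Module 𝕜 E] [TopologicalSpace E] [ContinuousAdd E] [ContinuousConstSMul 𝕜 E]
    (x : ℕ → E) (n : ℕ) : Submodule 𝕜 E :=
  (span 𝕜 (x '' Ioi n)).topologicalClosure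

section

variable {𝕜 E : Type*} [NontriviallyNormedField 𝕜] [AddCommGroup E] [TopologicalSpace E]
  [IsTopologicalAddGroup E] [Module 𝕜 E] [ContinuousSMul 𝕜 E] (x : ℕ → E)

lemma span_image_le_closedTailSpan {s : Set ℕ} {j : ℕ} (hs : s ⊆ Ioi j) :
    span 𝕜 (x '' s) ≤ closedTailSpan 𝕜 x j :=
  (span_mono (image_mono hs)).trans (le_topologicalClosure _)

lemma closedTailSpan_antitone : Antitone (closedTailSpan 𝕜 x) := fun _ _ hjn =>
  topologicalClosure_mono (span_mono (image_mono fun _ hk => lt_of_le_of_lt hjn hk))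

lemma mem_closedTailSpan {j n : ℕ} (hjn : j < n) : x n ∈ closedTailSpan 𝕜 x j :=
  le_topologicalClosure _ (subset_span (mem_image_of_mem x hjn))

lemma mem_closedTailSpan_sup_span_Ico_add_one {j n : ℕ} (hjn : j < n)
    (hj : x j ∉ closedTailSpan 𝕜 x j)
    (h : x n ∈ closedTailSpan 𝕜 x n ⊔ span 𝕜 (x '' Ico j n)) :
    x n ∈ closedTailSpan 𝕜 x n ⊔ span 𝕜 (x '' Ico (j + 1) n) := by
  rw [← insert_Ico_add_one_left_eq_Ico hjn, image_insert_eq, span_insert, sup_left_comm] at h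
  obtain ⟨_, hc, w, hw, hxn⟩ := mem_sup.1 h
  obtain ⟨c, rfl⟩ := mem_span_singleton.1 hc
  rcases eq_or_ne c 0 with rfl | hc
  · simpa [← hxn] using hw
  · have hle : closedTailSpan 𝕜 x n ⊔ span 𝕜 (x '' Ico (j + 1) n) ≤ closedTailSpan 𝕜 x j :=
      sup_le (closedTailSpan_antitone x hjn.le) (span_image_le_closedTailSpan x fun _ hk => hk.1)
    have hcxj : c • x j ∈ closedTailSpan 𝕜 x j := by
      rw [eq_sub_of_add_eq hxn]
      exact sub_mem (mem_closedTailSpan x hjn) (hle hw)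
    exact absurd ((smul_mem_iff _ hc).1 hcxj) hj

lemma mem_closedTailSpan_of_mem_sup_span_Iio {n : ℕ}
    (hx : ∀ j < n, x j ∉ closedTailSpan 𝕜 x j)
    (h : x n ∈ closedTailSpan 𝕜 x n ⊔ span 𝕜 (x '' Iio n)) :
    x n ∈ closedTailSpan 𝕜 x n := by
  rw [← show Ico 0 n = Iio n from Ico_bot] at h
  refine Nat.decreasingInduction
    (motive := fun m _ => x n ∈ closedTailSpan 𝕜 x n ⊔ span 𝕜 (x '' Ico m n) →
      x n ∈ closedTailSpan 𝕜 x n)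
    (fun k hk ih h => ih (mem_closedTailSpan_sup_span_Ico_add_one x hk (hx k hk) h))
    (fun h => by simpa using h) (Nat.zero_le n) h

lemma closure_span_image_ne_subset [CompleteSpace 𝕜] (n : ℕ) :
    closure (span 𝕜 (x '' {k | k ≠ n}) : Set E) ⊆
      (closedTailSpan 𝕜 x n ⊔ span 𝕜 (x '' Iio n) : Submodule 𝕜 E) := by
  have : FiniteDimensional 𝕜 (span 𝕜 (x '' Iio n)) :=
    FiniteDimensional.span_of_finite 𝕜 ((finite_Iio n).image x)
  refine closure_minimal (span_le.2 ?_)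
    (isClosed_sup_finiteDimensional _ _ (isClosed_topologicalClosure _))
  rintro _ ⟨k, hk, rfl⟩
  rcases lt_or_gt_of_ne hk with hlt | hgt
  · exact mem_sup_right (subset_span (mem_image_of_mem x hlt))
  · exact mem_sup_left (mem_closedTailSpan x hgt)

end

theorem minimal_sequences_iff_general
    (X : Type*) [NormedAddCommGroup X] [NormedSpace ℂ X]
    (x : ℕ → X) :
    (∀ n : ℕ, x n ∉ closure (Submodule.span ℂ (x '' {k | k ≠ n}) : Set X)) ↔
    (∀ n : ℕ, x n ∉ closure (Submodule.span ℂ (x '' {k | n < k}) : Set X)) := by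
  have tail_iff : ∀ n, x n ∈ closure (span ℂ (x '' {k | n < k}) : Set X) ↔
      x n ∈ closedTailSpan ℂ x n := fun n => by
    rw [closedTailSpan, ← SetLike.mem_coe, topologicalClosure_coe]
    rfl
  simp only [tail_iff]
  refine ⟨fun h n hn => h n ?_, fun h n hn => ?_⟩
  · exact closure_mono (span_mono (image_mono fun _ hk => ne_of_gt hk)) hn
  · exact h n (mem_closedTailSpan_of_mem_sup_span_Iio x (fun j _ => h j)
      (closure_span_image_ne_subset x n hn))

/-- For a sequence `(xₙ)` in a Banach space `X`:
`xₙ ∉ closure (span {x_k : k ≠ n})` for all `n` iff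
`xₙ ∉ closure (span {x_k : k > n})` for all `n`. -/
theorem minimal_sequences_iff
    (X : Type*) [NormedAddCommGroup X] [NormedSpace ℂ X] [CompleteSpace X]
    (x : ℕ → X) :
    (∀ n : ℕ, x n ∉ closure (Submodule.span ℂ (x '' {k | k ≠ n}) : Set X)) ↔
    (∀ n : ℕ, x n ∉ closure (Submodule.span ℂ (x '' {k | n < k}) : Set X)) :=
  minimal_sequences_iff_general X x
end

section
/- Let X and Y be Banach spaces and let T = [[A, X₀],[C, B]] be a bounded operator on X ⊕ Y written in block form (A : X → X, X₀ : Y → X, C : X → Y, B : Y → Y). If rank T = rank C = κ < ∞, then X₀ is uniquely determined by A, C and B; that is, any two such operators T with the same A, B, C and the same rank condition have equal (1,2)-entries. -/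
/-!
The rank condition forces the projection `(x, y) ↦ y` to be injective on `range T`: its image
contains `range C` (from the vectors `T (x, 0)`) and has dimension at most `rank T = rank C`.
Hence `range T` meets `X × {0}` only in `0`. If `C x = B y`, then `T (-x, y) = (X₀ y - A x, 0)`
lies in that intersection, so `X₀ y = A x`; and every `B y` is of the form `C x`, because
`(0, B y) = T (0, y)` projects into `range C`. So `X₀` is determined on all of `Y` by `A`, `B`, `C`.
-/

open Module LinearMap

section BlockOperator

variable {K X Y : Type*} [Field K] [AddCommGroup X] [Module K X] [AddCommGroup Y] [Module K Y]

def blockOp (A : X →ₗ[K] X) (X₀ : Y →ₗ[K] X) (C : X →ₗ[K] Y) (B : Y →ₗ[K] Y) :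
    X × Y →ₗ[K] X × Y :=
  (A.coprod X₀).prod (C.coprod B)

variable {A : X →ₗ[K] X} {X₀ : Y →ₗ[K] X} {C : X →ₗ[K] Y} {B : Y →ₗ[K] Y}

@[simp]
theorem blockOp_apply (p : X × Y) :
    blockOp A X₀ C B p = (A p.1 + X₀ p.2, C p.1 + B p.2) :=
  rfl

theorem range_le_map_snd_range_blockOp :
    range C ≤ (range (blockOp A X₀ C B)).map (snd K X Y) := by
  rintro _ ⟨x, rfl⟩
  exact ⟨blockOp A X₀ C B (x, 0), mem_range_self _ _, by simp⟩

theorem map_snd_range_blockOp_eq [FiniteDimensional K (range (blockOp A X₀ C B))]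
    (h : finrank K (range (blockOp A X₀ C B)) ≤ finrank K (range C)) :
    (range (blockOp A X₀ C B)).map (snd K X Y) = range C :=
  (Submodule.eq_of_le_of_finrank_le range_le_map_snd_range_blockOp
    ((Submodule.finrank_map_le _ _).trans h)).symm

theorem disjoint_range_blockOp_ker_snd [FiniteDimensional K (range (blockOp A X₀ C B))]
    (h : finrank K (range (blockOp A X₀ C B)) ≤ finrank K (range C)) :
    Disjoint (range (blockOp A X₀ C B)) (ker (snd K X Y)) :=
  Submodule.disjoint_ker_of_finrank_le _ (by rwa [map_snd_range_blockOp_eq h])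

theorem range_le_range_of_finrank_range_blockOp_le
    [FiniteDimensional K (range (blockOp A X₀ C B))]
    (h : finrank K (range (blockOp A X₀ C B)) ≤ finrank K (range C)) :
    range B ≤ range C := by
  rintro _ ⟨y, rfl⟩
  rw [← map_snd_range_blockOp_eq h]
  exact ⟨blockOp A X₀ C B (0, y), mem_range_self _ _, by simp⟩

theorem apply_eq_of_finrank_range_blockOp_le
    [FiniteDimensional K (range (blockOp A X₀ C B))]
    (h : finrank K (range (blockOp A X₀ C B)) ≤ finrank K (range C))
    {x : X} {y : Y} (hxy : C x = B y) : X₀ y = A x := by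
  have hmem : (X₀ y - A x, (0 : Y)) ∈ range (blockOp A X₀ C B) :=
    ⟨(-x, y), by simp [hxy, sub_eq_neg_add]⟩
  have hzero := (disjoint_range_blockOp_ker_snd h).eq_bot ▸ Submodule.mem_inf.2 ⟨hmem, rfl⟩
  simpa [sub_eq_zero] using hzero

theorem corner_eq_of_finrank_range_blockOp_le {X₀' : Y →ₗ[K] X}
    [FiniteDimensional K (range (blockOp A X₀ C B))]
    [FiniteDimensional K (range (blockOp A X₀' C B))]
    (h : finrank K (range (blockOp A X₀ C B)) ≤ finrank K (range C))
    (h' : finrank K (range (blockOp A X₀' C B)) ≤ finrank K (range C)) :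
    X₀ = X₀' := by
  ext y
  obtain ⟨x, hx⟩ := range_le_range_of_finrank_range_blockOp_le h (mem_range_self B y)
  rw [apply_eq_of_finrank_range_blockOp_le h hx, apply_eq_of_finrank_range_blockOp_le h' hx]

end BlockOperator

theorem block_corner_uniquely_determined_general
    (X Y : Type*) [NormedAddCommGroup X] [NormedSpace ℂ X]
    [NormedAddCommGroup Y] [NormedSpace ℂ Y]
    (A : X →L[ℂ] X) (B : Y →L[ℂ] Y) (C : X →L[ℂ] Y)
    (X₀ X₀' : Y →L[ℂ] X)
    (T T' : (X × Y) →L[ℂ] (X × Y))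
    (hT : ∀ p : X × Y, T p = (A p.1 + X₀ p.2, C p.1 + B p.2))
    (hT' : ∀ p : X × Y, T' p = (A p.1 + X₀' p.2, C p.1 + B p.2))
    (κ : ℕ)
    (hrT : Module.rank ℂ (LinearMap.range (T : (X × Y) →ₗ[ℂ] (X × Y))) = (κ : Cardinal))
    (hrT' : Module.rank ℂ (LinearMap.range (T' : (X × Y) →ₗ[ℂ] (X × Y))) = (κ : Cardinal))
    (hrC : Module.rank ℂ (LinearMap.range (C : X →ₗ[ℂ] Y)) = (κ : Cardinal)) :
    X₀ = X₀' := by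
  have hTb : (T : X × Y →ₗ[ℂ] X × Y) = blockOp (A : X →ₗ[ℂ] X) X₀ C B := LinearMap.ext hT
  have hTb' : (T' : X × Y →ₗ[ℂ] X × Y) = blockOp (A : X →ₗ[ℂ] X) X₀' C B := LinearMap.ext hT'
  rw [hTb] at hrT
  rw [hTb'] at hrT'
  have := Module.finite_of_rank_eq_nat hrT
  have := Module.finite_of_rank_eq_nat hrT'
  have hfC := Module.finrank_eq_of_rank_eq hrC
  refine ContinuousLinearMap.coe_injective
    (corner_eq_of_finrank_range_blockOp_le (A := (A : X →ₗ[ℂ] X)) (C := C) (B := B) ?_ ?_)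
  · rw [Module.finrank_eq_of_rank_eq hrT, hfC]
  · rw [Module.finrank_eq_of_rank_eq hrT', hfC]

/-- If `T = [[A, X₀],[C, B]]` is a block operator on `X ⊕ Y` with
`rank T = rank C = κ < ∞`, then the `(1,2)`-entry `X₀` is uniquely determined
by `A`, `B` and `C`. -/
theorem block_corner_uniquely_determined
    (X Y : Type*) [NormedAddCommGroup X] [NormedSpace ℂ X] [CompleteSpace X]
    [NormedAddCommGroup Y] [NormedSpace ℂ Y] [CompleteSpace Y]
    (A : X →L[ℂ] X) (B : Y →L[ℂ] Y) (C : X →L[ℂ] Y)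
    (X₀ X₀' : Y →L[ℂ] X)
    (T T' : (X × Y) →L[ℂ] (X × Y))
    (hT : ∀ p : X × Y, T p = (A p.1 + X₀ p.2, C p.1 + B p.2))
    (hT' : ∀ p : X × Y, T' p = (A p.1 + X₀' p.2, C p.1 + B p.2))
    (κ : ℕ)
    (hrT : Module.rank ℂ (LinearMap.range (T : (X × Y) →ₗ[ℂ] (X × Y))) = (κ : Cardinal))
    (hrT' : Module.rank ℂ (LinearMap.range (T' : (X × Y) →ₗ[ℂ] (X × Y))) = (κ : Cardinal))
    (hrC : Module.rank ℂ (LinearMap.range (C : X →ₗ[ℂ] Y)) = (κ : Cardinal)) :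
    X₀ = X₀' :=
  block_corner_uniquely_determined_general X Y A B C X₀ X₀' T T' hT hT' κ hrT hrT' hrC
end

section
/- Let X, Y be finite-dimensional spaces and T = [[A, X₀],[C, B]] a linear map on X ⊕ Y in block form. If C : X → Y is invertible and rank T = rank C, then X₀ = A C⁻¹ B. -/
/-!
The columns of `T` give `range T = range [A; C] ⊔ range [X₀; B]`. Since `C` is injective, so is
`[A; C]`, whence `rank [A; C] = dim X = rank C = rank T`; thus the supremum collapses and every
column `(X₀ y, B y)` equals some `(A x, C x)`. Then `x = C⁻¹ (B y)` and `X₀ y = A C⁻¹ B y`.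
-/

open Module LinearMap

theorem Submodule.le_of_finrank_sup_le {K V : Type*} [DivisionRing K] [AddCommGroup V]
    [Module K V] {P Q : Submodule K V} [FiniteDimensional K ↥(P ⊔ Q)]
    (h : finrank K ↥(P ⊔ Q) ≤ finrank K P) : Q ≤ P :=
  sup_eq_left.mp (Submodule.eq_of_le_of_finrank_le le_sup_left h).symm

section

variable {R X Y Z W : Type*} [Semiring R] [AddCommMonoid X] [Module R X] [AddCommMonoid Y]
  [Module R Y] [AddCommMonoid Z] [Module R Z] [AddCommMonoid W] [Module R W]

theorem LinearMap.finrank_range_prod_of_injective_right (A : X →ₗ[R] Z) {C : X →ₗ[R] Y}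
    (hC : Function.Injective C) : finrank R (range (A.prod C)) = finrank R X :=
  finrank_range_of_inj fun _ _ h ↦ hC (congrArg Prod.snd h)

theorem LinearMap.eq_comp_symm_comp_of_range_prod_le (A : X →ₗ[R] Z) (C : X ≃ₗ[R] Y)
    (X₀ : W →ₗ[R] Z) (B : W →ₗ[R] Y)
    (h : range (X₀.prod B) ≤ range (A.prod (C : X →ₗ[R] Y))) :
    X₀ = A ∘ₗ (C.symm : Y →ₗ[R] X) ∘ₗ B := by
  ext w
  obtain ⟨x, hx⟩ := h ⟨w, rfl⟩
  have hA : A x = X₀ w := congrArg Prod.fst hx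
  have hC : C x = B w := congrArg Prod.snd hx
  simp [← hA, ← hC]

end

theorem block_corner_formula_general
    (X Y : Type*) [AddCommGroup X] [Module ℂ X] [AddCommGroup Y] [Module ℂ Y]
    [FiniteDimensional ℂ X]
    (A : X →ₗ[ℂ] X) (B : Y →ₗ[ℂ] Y) (C : X ≃ₗ[ℂ] Y) (X₀ : Y →ₗ[ℂ] X)
    (T : (X × Y) →ₗ[ℂ] (X × Y))
    (hT : ∀ p : X × Y, T p = (A p.1 + X₀ p.2, C p.1 + B p.2))
    (hrank : Module.finrank ℂ (LinearMap.range T) =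
      Module.finrank ℂ (LinearMap.range (C : X →ₗ[ℂ] Y))) :
    X₀ = A ∘ₗ (C.symm : Y →ₗ[ℂ] X) ∘ₗ B := by
  have : FiniteDimensional ℂ Y := C.finiteDimensional
  have hT_columns : T = (A.prod (C : X →ₗ[ℂ] Y)).coprod (X₀.prod B) :=
    LinearMap.ext fun p ↦ by simp [hT]
  have hrank_columns : finrank ℂ (range (A.prod (C : X →ₗ[ℂ] Y))) =
      finrank ℂ (range (C : X →ₗ[ℂ] Y)) := by
    rw [finrank_range_prod_of_injective_right A C.injective, finrank_range_of_inj C.injective]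
  refine eq_comp_symm_comp_of_range_prod_le A C X₀ B (Submodule.le_of_finrank_sup_le ?_)
  rw [← range_coprod, ← hT_columns, hrank, hrank_columns]

/-- Finite-dimensional case: if `T = [[A, X₀],[C, B]]` with `C` invertible and
`rank T = rank C`, then `X₀ = A C⁻¹ B`. -/
theorem block_corner_formula
    (X Y : Type*) [AddCommGroup X] [Module ℂ X] [AddCommGroup Y] [Module ℂ Y]
    [FiniteDimensional ℂ X] [FiniteDimensional ℂ Y]
    (A : X →ₗ[ℂ] X) (B : Y →ₗ[ℂ] Y) (C : X ≃ₗ[ℂ] Y) (X₀ : Y →ₗ[ℂ] X)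
    (T : (X × Y) →ₗ[ℂ] (X × Y))
    (hT : ∀ p : X × Y, T p = (A p.1 + X₀ p.2, C p.1 + B p.2))
    (hrank : Module.finrank ℂ (LinearMap.range T) =
      Module.finrank ℂ (LinearMap.range (C : X →ₗ[ℂ] Y))) :
    X₀ = A ∘ₗ (C.symm : Y →ₗ[ℂ] X) ∘ₗ B :=
  block_corner_formula_general X Y A B C X₀ T hT hrank
end

section
/- Let L be a linear subspace of operators of rank at most k on a Hilbert space H, and let A₀ ∈ L be an element of maximal rank κ. If S, T are invertible operators with S A₀ T = [[I_κ, 0],[0, 0]] (block form with respect to an orthogonal decomposition H = H₁ ⊕ H₂, dim H₁ = κ), then for every A ∈ L, writing S A T = [[A₁₁, A₁₂],[A₂₁, A₂₂]] in the same block form, one has A₂₂ = 0. -/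
/-!
Put `B = S A T`. Since `Q + t B = S (A₀ + t A) T` and `A₀ + t A ∈ L`, every member of the
pencil `Q + t B` has rank at most `κ = rank Q`. For a linearly independent family `a`, the
family `a + t b` stays independent for all but finitely many `t` (a determinant `det (1 + t M)`
is a nonzero polynomial in `t`). If some `x ∈ ker Q` had `B x ∉ range Q`, a basis of `range Q`
together with `B x` would thus give, for a suitable `t ≠ 0`, `κ + 1` independent vectors in
`range (Q + t B)`. Hence `B` maps `ker Q = range (1 - Q)` into `range Q = ker (1 - Q)`.
-/

open Polynomial

theorem Matrix.finite_setOf_det_one_add_smul_eq_zero {n K : Type*} [Fintype n] [DecidableEq n]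
    [Field K] (M : Matrix n n K) : {t : K | (1 + t • M).det = 0}.Finite := by
  set p : K[X] := (1 + (X : K[X]) • M.map C).det
  have hp : ∀ t, p.eval t = (1 + t • M).det := fun t => by
    rw [← coe_evalRingHom, RingHom.map_det]
    congr 1
    ext i j
    by_cases h : i = j <;> simp [h] <;> ring
  have hp0 : p ≠ 0 := fun h => by
    have h1 := hp 0
    rw [h, eval_zero, zero_smul, add_zero, det_one] at h1
    exact zero_ne_one h1
  exact (finite_setOfPred_isRoot hp0).subset fun t ht => (hp t).trans ht

theorem LinearIndependent.finite_setOf_not_linearIndependent_add_smul {ι K V : Type*}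
    [Fintype ι] [DecidableEq ι] [Field K] [AddCommGroup V] [Module K V] {a : ι → V}
    (ha : LinearIndependent K a) (b : ι → V) :
    {t : K | ¬LinearIndependent K (a + t • b)}.Finite := by
  obtain ⟨ψ, hψ⟩ := (Finsupp.linearCombination K a).exists_leftInverse_of_injective
    (LinearMap.ker_eq_bot.2 ha)
  let M : Matrix ι ι K := Matrix.of fun i j => ψ (b j) i
  have hψa : ∀ j, ψ (a j) = Finsupp.single j 1 := fun j => by
    simpa using LinearMap.congr_fun hψ (Finsupp.single j 1)
  refine (M.finite_setOf_det_one_add_smul_eq_zero).subset fun t ht => ?_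
  by_contra hdet
  refine ht (LinearIndependent.of_comp (Finsupp.lcoeFun ∘ₗ ψ) ?_)
  have hcols : ⇑(Finsupp.lcoeFun ∘ₗ ψ) ∘ (a + t • b) = (1 + t • M).col := by
    ext j i
    simp [hψa, M, Matrix.one_apply, Finsupp.single_apply, eq_comm]
  rw [hcols, Matrix.linearIndependent_cols_iff_isUnit, Matrix.isUnit_iff_isUnit_det]
  exact isUnit_iff_ne_zero.2 hdet

theorem LinearMap.map_ker_le_range_of_forall_rank_add_smul_le {K V W : Type*} [Field K]
    [Infinite K] [AddCommGroup V] [Module K V] [AddCommGroup W] [Module K W]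
    {f g : V →ₗ[K] W} {κ : ℕ} (hf : f.rank = κ) (h : ∀ t : K, (f + t • g).rank ≤ κ) :
    (ker f).map g ≤ range f := by
  rintro _ ⟨x, hx, rfl⟩
  by_contra hgx
  have : Module.Finite K (range f) := Module.finite_of_rank_eq_nat hf
  let e : Module.Basis (Fin κ) K (range f) :=
    Module.finBasisOfFinrankEq K _ (Module.finrank_eq_of_rank_eq hf)
  choose u hu using fun j => mem_range.1 (e j).2
  let a : Fin (κ + 1) → W := Fin.snoc (fun j => (e j : W)) (g x)
  let b : Fin (κ + 1) → W := Fin.snoc (fun j => g (u j)) 0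
  have hspan : Submodule.span K (Set.range ((range f).subtype ∘ e)) = range f := by
    rw [Set.range_comp, ← Submodule.map_span, e.span_eq, Submodule.map_top,
      Submodule.range_subtype]
  have ha : LinearIndependent K a := by
    refine linearIndependent_finSnoc.2
      ⟨e.linearIndependent.map' (range f).subtype (range f).ker_subtype, ?_⟩
    rwa [← hspan] at hgx
  obtain ⟨t, ht0 : t ≠ 0, htind⟩ :=
    (Set.finite_singleton (0 : K)).infinite_compl.exists_notMem_finite
      (ha.finite_setOf_not_linearIndependent_add_smul b)
  have hmem : ∀ j, (a + t • b) j ∈ range (f + t • g) := by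
    refine Fin.lastCases ?_ (fun j => ?_)
    · refine ⟨t⁻¹ • x, ?_⟩
      simp [a, b, mem_ker.1 hx, smul_smul, ht0]
    · exact ⟨u j, by simp [a, b, hu j]⟩
  have hle : ((κ + 1 : ℕ) : Cardinal) ≤ (f + t • g).rank :=
    natCast_le_rank_iff.2
      ⟨fun j => ⟨_, hmem j⟩, LinearIndependent.of_comp (range _).subtype (not_not.1 htind)⟩
  have := hle.trans (h t)
  norm_cast at this
  omega

theorem LinearMap.one_sub_mul_mul_one_sub_eq_zero {R M : Type*} [Ring R] [AddCommGroup M]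
    [Module R M] {p f : M →ₗ[R] M} (hp : IsIdempotentElem p) (hf : (ker p).map f ≤ range p) :
    (1 - p) * f * (1 - p) = 0 := by
  ext x
  have hx : (1 - p) x ∈ ker p := IsIdempotentElem.ker_eq_range_one_sub hp ▸ mem_range_self _ x
  have hfx : f ((1 - p) x) ∈ ker (1 - p) :=
    IsIdempotentElem.range_eq_ker_one_sub hp ▸ hf (Submodule.mem_map_of_mem hx)
  exact hfx

theorem maximal_rank_corner_vanishes_general
    {H : Type*} [NormedAddCommGroup H] [InnerProductSpace ℂ H]
    (κ : ℕ) (L : Submodule ℂ (H →L[ℂ] H))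
    (A₀ : H →L[ℂ] H) (hA₀ : A₀ ∈ L)
    (hmax : ∀ A ∈ L, Module.rank ℂ (LinearMap.range (A : H →ₗ[ℂ] H)) ≤ (κ : Cardinal))
    (Q : H →L[ℂ] H) (hQ : IsIdempotentElem Q)
    (hQrank : Module.rank ℂ (LinearMap.range (Q : H →ₗ[ℂ] H)) = (κ : Cardinal))
    (S T : (H →L[ℂ] H)ˣ)
    (hST : (S : H →L[ℂ] H) * A₀ * (T : H →L[ℂ] H) = Q) :
    ∀ A ∈ L, (1 - Q) * ((S : H →L[ℂ] H) * A * (T : H →L[ℂ] H)) * (1 - Q) = 0 := by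
  intro A hA
  set B : H →L[ℂ] H := S * A * T
  have hrank (t : ℂ) : ((Q + t • B : H →L[ℂ] H) : H →ₗ[ℂ] H).rank ≤ κ := by
    have hpencil : Q + t • B = S * (A₀ + t • A) * T := by
      rw [← hST]
      noncomm_ring
    calc ((Q + t • B : H →L[ℂ] H) : H →ₗ[ℂ] H).rank
        = ((S : H →ₗ[ℂ] H) ∘ₗ (A₀ + t • A : H →L[ℂ] H) ∘ₗ (T : H →ₗ[ℂ] H)).rank := by
          rw [hpencil]
          rfl
      _ ≤ ((A₀ + t • A : H →L[ℂ] H) : H →ₗ[ℂ] H).rank :=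
          (LinearMap.rank_comp_le_right _ _).trans (LinearMap.rank_comp_le_left _ _)
      _ ≤ κ := hmax _ (L.add_mem hA₀ (L.smul_mem t hA))
  have hQ' : IsIdempotentElem (Q : H →ₗ[ℂ] H) := by
    rw [IsIdempotentElem, ← ContinuousLinearMap.toLinearMap_mul, hQ.eq]
  have hcorner := LinearMap.one_sub_mul_mul_one_sub_eq_zero hQ'
    (LinearMap.map_ker_le_range_of_forall_rank_add_smul_le hQrank hrank)
  exact ContinuousLinearMap.coe_injective hcorner

/-- If `A₀ ∈ L` has maximal rank `κ` in the subspace `L` of operators of rank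
at most `k`, and `S A₀ T = Q` where `Q` is the orthogonal projection of rank
`κ` (the block `[[I_κ,0],[0,0]]`), then for every `A ∈ L` the `(2,2)`-block of
`S A T`, namely `(1 - Q)(S A T)(1 - Q)`, vanishes. -/
theorem maximal_rank_corner_vanishes
    {H : Type*} [NormedAddCommGroup H] [InnerProductSpace ℂ H] [CompleteSpace H]
    (k κ : ℕ) (L : Submodule ℂ (H →L[ℂ] H))
    (hL : ∀ A ∈ L, Module.rank ℂ (LinearMap.range (A : H →ₗ[ℂ] H)) ≤ (k : Cardinal))
    (A₀ : H →L[ℂ] H) (hA₀ : A₀ ∈ L)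
    (hA₀rank : Module.rank ℂ (LinearMap.range (A₀ : H →ₗ[ℂ] H)) = (κ : Cardinal))
    (hmax : ∀ A ∈ L, Module.rank ℂ (LinearMap.range (A : H →ₗ[ℂ] H)) ≤ (κ : Cardinal))
    (Q : H →L[ℂ] H) (hQ : IsIdempotentElem Q) (hQsa : IsSelfAdjoint Q)
    (hQrank : Module.rank ℂ (LinearMap.range (Q : H →ₗ[ℂ] H)) = (κ : Cardinal))
    (S T : (H →L[ℂ] H)ˣ)
    (hST : (S : H →L[ℂ] H) * A₀ * (T : H →L[ℂ] H) = Q) :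
    ∀ A ∈ L, (1 - Q) * ((S : H →L[ℂ] H) * A * (T : H →L[ℂ] H)) * (1 - Q) = 0 :=
  maximal_rank_corner_vanishes_general κ L A₀ hA₀ hmax Q hQ hQrank S T hST
end

section
/- Let H be a Hilbert space with a topologically complemented closed subspace Y, and let E ∈ B(H) be an idempotent with range Y. Then, for T ∈ B(H), there is a finite-dimensional subspace M with T Y ⊆ Y + M if and only if (I − E) T E has finite rank; moreover the minimal dimension of such M equals rank((I − E) T E). -/
/-!
Write `Y = range E`. For `y = E x ∈ Y`, applying `1 - E` (which kills `Y`) to `T y = y' + m`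
with `y' ∈ Y`, `m ∈ M` gives `(1 - E) T E x = (1 - E) m`; hence `range ((1 - E) T E)` lies in
`(1 - E) M`, whose dimension is at most `dim M`. Conversely `T y = E T y + (1 - E) T E y`, so
`M = range ((1 - E) T E)` itself is admissible.
-/

namespace LinearMap

variable {R V : Type*} [Ring R] [AddCommGroup V] [Module R V] {E : V →ₗ[R] V}

theorem range_one_sub_mul_mul_le_map_one_sub (hE : IsIdempotentElem E) (T : V →ₗ[R] V)
    {M : Submodule R V} (hM : ∀ y ∈ range E, T y ∈ range E ⊔ M) :
    range ((1 - E) * T * E) ≤ M.map (1 - E) := by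
  rintro _ ⟨x, rfl⟩
  obtain ⟨y, hy, m, hm, hym⟩ := Submodule.mem_sup.mp (hM (E x) (mem_range_self E x))
  have hy0 : (1 - E) y = 0 := by
    rwa [IsIdempotentElem.range_eq_ker_one_sub hE, mem_ker] at hy
  refine ⟨m, hm, ?_⟩
  calc (1 - E) m = (1 - E) (y + m) := by rw [map_add, hy0, zero_add]
    _ = ((1 - E) * T * E) x := by rw [hym]; rfl

theorem apply_mem_range_sup_range_one_sub_mul_mul (hE : IsIdempotentElem E) (T : V →ₗ[R] V) :
    ∀ y ∈ range E, T y ∈ range E ⊔ range ((1 - E) * T * E) := by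
  intro y hy
  have hEy : E y = y := (IsIdempotentElem.mem_range_iff hE).mp hy
  have hTy : T y = E (T y) + ((1 - E) * T * E) y := by
    simp only [Module.End.mul_apply, hEy, sub_apply, Module.End.one_apply, add_sub_cancel]
  rw [hTy]
  exact Submodule.add_mem_sup (mem_range_self E _) (mem_range_self _ y)

end LinearMap

theorem almost_invariant_iff_corner_finite_rank_general
    {H : Type*} [NormedAddCommGroup H] [InnerProductSpace ℂ H]
    (Y : Submodule ℂ H)
    (E : H →L[ℂ] H) (hE : IsIdempotentElem E)
    (hrange : LinearMap.range (E : H →ₗ[ℂ] H) = Y)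
    (T : H →L[ℂ] H) :
    ((∃ M : Submodule ℂ H, FiniteDimensional ℂ M ∧ ∀ y ∈ Y, T y ∈ Y ⊔ M) ↔
      FiniteDimensional ℂ (LinearMap.range (((1 - E) * T * E : H →L[ℂ] H) : H →ₗ[ℂ] H))) ∧
    (FiniteDimensional ℂ (LinearMap.range (((1 - E) * T * E : H →L[ℂ] H) : H →ₗ[ℂ] H)) →
      IsLeast {n : ℕ | ∃ M : Submodule ℂ H, FiniteDimensional ℂ M ∧
          Module.finrank ℂ M = n ∧ ∀ y ∈ Y, T y ∈ Y ⊔ M}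
        (Module.finrank ℂ (LinearMap.range (((1 - E) * T * E : H →L[ℂ] H) : H →ₗ[ℂ] H)))) := by
  subst hrange
  have hE' : IsIdempotentElem (E : H →ₗ[ℂ] H) := hE.map ContinuousLinearMap.toLinearMapRingHom
  have hcorner : (((1 - E) * T * E : H →L[ℂ] H) : H →ₗ[ℂ] H) = (1 - E) * T * E := rfl
  rw [hcorner]
  have hadm := LinearMap.apply_mem_range_sup_range_one_sub_mul_mul hE' T
  refine ⟨⟨?_, fun h ↦ ⟨_, h, hadm⟩⟩, fun h ↦ ⟨⟨_, h, rfl, hadm⟩, ?_⟩⟩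
  · rintro ⟨M, hM, hTM⟩
    exact Submodule.finiteDimensional_of_le
      (LinearMap.range_one_sub_mul_mul_le_map_one_sub hE' T hTM)
  · rintro _ ⟨M, hM, rfl, hTM⟩
    exact (Submodule.finrank_mono
      (LinearMap.range_one_sub_mul_mul_le_map_one_sub hE' T hTM)).trans
        (Submodule.finrank_map_le _ _)

/-- Let `E` be a bounded idempotent with range the closed subspace `Y` of a
Hilbert space `H`. Then `Y` is almost-invariant for `T` (i.e. `T Y ⊆ Y + M`
for some finite-dimensional `M`) iff `(I - E) T E` has finite rank, and in
that case the minimal dimension of such an `M` (the defect) equals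
`rank ((I - E) T E)`. -/
theorem almost_invariant_iff_corner_finite_rank
    {H : Type*} [NormedAddCommGroup H] [InnerProductSpace ℂ H] [CompleteSpace H]
    (Y : Submodule ℂ H) (hYc : IsClosed (Y : Set H))
    (E : H →L[ℂ] H) (hE : IsIdempotentElem E)
    (hrange : LinearMap.range (E : H →ₗ[ℂ] H) = Y)
    (T : H →L[ℂ] H) :
    ((∃ M : Submodule ℂ H, FiniteDimensional ℂ M ∧ ∀ y ∈ Y, T y ∈ Y ⊔ M) ↔
      FiniteDimensional ℂ (LinearMap.range (((1 - E) * T * E : H →L[ℂ] H) : H →ₗ[ℂ] H))) ∧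
    (FiniteDimensional ℂ (LinearMap.range (((1 - E) * T * E : H →L[ℂ] H) : H →ₗ[ℂ] H)) →
      IsLeast {n : ℕ | ∃ M : Submodule ℂ H, FiniteDimensional ℂ M ∧
          Module.finrank ℂ M = n ∧ ∀ y ∈ Y, T y ∈ Y ⊔ M}
        (Module.finrank ℂ (LinearMap.range (((1 - E) * T * E : H →L[ℂ] H) : H →ₗ[ℂ] H)))) :=
  almost_invariant_iff_corner_finite_rank_general Y E hE hrange T
end

section
/- Let T be a bounded operator on a separable Hilbert space H such that T X − X T has finite rank for every X ∈ B(H). Then T = α I + H₀ for some scalar α and finite-rank operator H₀. -/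
/-!
If `T` is not a scalar plus a finite-rank operator, then for every finite-dimensional `K` there
are orthonormal `x, y ⊥ K` with `⟪y, T x⟫ ≠ 0`: otherwise the compression of `T` to `Kᗮ`
sends every vector to a multiple of itself, hence is a scalar `α`, and `T - α` maps `Kᗮ`
into `K`.

Letting `K` absorb all earlier `x k, y k, T† (y k)` yields orthonormal sequences `x ⊥ y` with
`⟪y k, T (x n)⟫` upper triangular with nonzero diagonal. For the partial isometry `X` sending
`y n` to `x n` and with range orthogonal to every `y k`, this matrix is `⟪y k, [T, X] (y n)⟫`,
so the vectors `[T, X] (y n)` are linearly independent and `[T, X]` has infinite rank.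
-/

open scoped InnerProductSpace

theorem linearIndependent_of_triangular {R M : Type*} [CommRing R] [NoZeroDivisors R]
    [AddCommGroup M] [Module R M] {v : ℕ → M} (f : ℕ → Module.Dual R M)
    (htri : ∀ k n, k < n → f k (v n) = 0) (hdiag : ∀ n, f n (v n) ≠ 0) :
    LinearIndependent R v := by
  rw [linearIndependent_iff']
  intro s g hsum i
  induction i using Nat.strong_induction_on with
  | _ i ih =>
    intro hi
    have h := congr(f i $hsum)
    simp only [map_sum, map_smul, smul_eq_mul, map_zero] at h
    rw [Finset.sum_eq_single i (fun j hj hji => ?_) (absurd hi)] at h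
    · exact (mul_eq_zero.mp h).resolve_right (hdiag i)
    · rcases hji.lt_or_gt with hji | hij
      · rw [ih j hji hj, zero_mul]
      · rw [htri i j hij, mul_zero]

section
variable {𝕜 E : Type*} [RCLike 𝕜] [NormedAddCommGroup E] [InnerProductSpace 𝕜 E]

open Submodule ContinuousLinearMap

theorem finiteDimensional_range_of_forall_mem_orthogonal_apply_mem (S : E →ₗ[𝕜] E)
    (K : Submodule 𝕜 E) [FiniteDimensional 𝕜 K] (hS : ∀ z ∈ Kᗮ, S z ∈ K) :
    FiniteDimensional 𝕜 (LinearMap.range S) := by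
  refine Submodule.finiteDimensional_of_le (S₂ := K ⊔ K.map S) ?_
  rintro - ⟨u, rfl⟩
  obtain ⟨v, hv, z, hz, rfl⟩ := K.exists_add_mem_mem_orthogonal u
  rw [map_add]
  exact add_mem (mem_sup_right (mem_map_of_mem hv)) (mem_sup_left (hS z hz))

theorem exists_mem_orthogonal_apply_notMem_sup_span (T : E →L[𝕜] E)
    (hT : ∀ α : 𝕜,
      ¬ FiniteDimensional 𝕜 (LinearMap.range ((T - α • 1 : E →L[𝕜] E) : E →ₗ[𝕜] E)))
    (K : Submodule 𝕜 E) [FiniteDimensional 𝕜 K] :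
    ∃ x ∈ Kᗮ, T x ∉ K ⊔ 𝕜 ∙ x := by
  by_contra! hK
  let C : Kᗮ →ₗ[𝕜] Kᗮ :=
    Kᗮ.orthogonalProjectionOnto.toLinearMap ∘ₗ T.toLinearMap ∘ₗ Kᗮ.subtype
  have hC : ∀ x : Kᗮ, ∃ c : 𝕜, C x = c • x := by
    intro x
    obtain ⟨u, hu, v, hv, huv⟩ := mem_sup.mp (hK x x.2)
    obtain ⟨c, rfl⟩ := mem_span_singleton.mp hv
    refine ⟨c, ?_⟩
    simp [C, ← huv, orthogonalProjectionOnto_eq_zero_iff.mpr (le_orthogonal_orthogonal K hu)]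
  obtain ⟨α, hα⟩ := C.exists_eq_smul_id_of_forall_notLinearIndependent fun x hli => by
    obtain ⟨c, hc⟩ := hC x
    have := LinearIndependent.pair_iff.mp hli c (-1) (by rw [hc]; simp)
    exact one_ne_zero (neg_eq_zero.mp this.2)
  refine hT α (finiteDimensional_range_of_forall_mem_orthogonal_apply_mem _ K fun z hz => ?_)
  rw [← K.orthogonal_orthogonal, ← orthogonalProjectionOnto_eq_zero_iff]
  simpa [C, orthogonalProjectionOnto_mem_subspace_eq_self ⟨z, hz⟩, sub_eq_zero]
    using LinearMap.congr_fun hα ⟨z, hz⟩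

theorem exists_unit_mem_orthogonal_apply_notMem_sup_span (T : E →L[𝕜] E)
    (hT : ∀ α : 𝕜,
      ¬ FiniteDimensional 𝕜 (LinearMap.range ((T - α • 1 : E →L[𝕜] E) : E →ₗ[𝕜] E)))
    (K : Submodule 𝕜 E) [FiniteDimensional 𝕜 K] :
    ∃ x ∈ Kᗮ, ‖x‖ = 1 ∧ T x ∉ K ⊔ 𝕜 ∙ x := by
  obtain ⟨x, hxK, hTx⟩ := exists_mem_orthogonal_apply_notMem_sup_span T hT K
  have hx : x ≠ 0 := by rintro rfl; simp at hTx
  have hc : (‖x‖⁻¹ : 𝕜) ≠ 0 := by simpa using hx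
  refine ⟨(‖x‖⁻¹ : 𝕜) • x, K.orthogonal.smul_mem _ hxK, norm_smul_inv_norm hx, ?_⟩
  rwa [span_singleton_smul_eq (IsUnit.mk0 _ hc), map_smul, smul_mem_iff _ hc]

theorem exists_orthonormal_pair_mem_orthogonal (T : E →L[𝕜] E)
    (hT : ∀ α : 𝕜,
      ¬ FiniteDimensional 𝕜 (LinearMap.range ((T - α • 1 : E →L[𝕜] E) : E →ₗ[𝕜] E)))
    (K : Submodule 𝕜 E) [FiniteDimensional 𝕜 K] :
    ∃ x y : E, x ∈ Kᗮ ∧ y ∈ Kᗮ ∧ ‖x‖ = 1 ∧ ‖y‖ = 1 ∧ ⟪x, y⟫_𝕜 = 0 ∧ ⟪y, T x⟫_𝕜 ≠ 0 := by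
  obtain ⟨x, hxK, hx, hTx⟩ := exists_unit_mem_orthogonal_apply_notMem_sup_span T hT K
  set N := K ⊔ 𝕜 ∙ x
  set w := T x - N.starProjection (T x)
  have hwN : w ∈ Nᗮ := N.sub_starProjection_mem_orthogonal (T x)
  have hw : w ≠ 0 := fun h => hTx (by rw [sub_eq_zero.mp h]; exact N.starProjection_apply_mem _)
  have hwTx : ⟪w, T x⟫_𝕜 = ⟪w, w⟫_𝕜 := by
    calc ⟪w, T x⟫_𝕜 = ⟪w, w + N.starProjection (T x)⟫_𝕜 := by rw [sub_add_cancel]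
      _ = ⟪w, w⟫_𝕜 := by
        rw [inner_add_right, inner_left_of_mem_orthogonal (N.starProjection_apply_mem _) hwN,
          add_zero]
  refine ⟨x, (‖w‖⁻¹ : 𝕜) • w, hxK, K.orthogonal.smul_mem _ (orthogonal_le le_sup_left hwN), hx,
    norm_smul_inv_norm hw, ?_, ?_⟩
  · rw [inner_smul_right, mul_eq_zero]
    exact .inr (inner_right_of_mem_orthogonal (mem_sup_right (mem_span_singleton_self x)) hwN)
  · rw [inner_smul_left, hwTx]
    simpa using hw

variable [CompleteSpace E]

theorem Orthonormal.adjoint_linearIsometry_apply {ι : Type*} {v : ι → E} (hv : Orthonormal 𝕜 v)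
    (w : E) (i : ι) :
    adjoint hv.orthogonalFamily.linearIsometry.toContinuousLinearMap w i = ⟪v i, w⟫_𝕜 := by
  classical
  set I := hv.orthogonalFamily.linearIsometry
  calc adjoint I.toContinuousLinearMap w i
      = ⟪lp.single 2 i (1 : 𝕜), adjoint I.toContinuousLinearMap w⟫_𝕜 := by
        simp [lp.inner_single_left]
    _ = ⟪v i, w⟫_𝕜 := by
        rw [adjoint_inner_right]
        simp [I, hv.orthogonalFamily.linearIsometry_apply_single]

theorem exists_apply_orthonormal_eq_and_inner_eq_zero {x y : ℕ → E} (hx : Orthonormal 𝕜 x)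
    (hy : Orthonormal 𝕜 y) (hyx : ∀ k n, ⟪y k, x n⟫_𝕜 = 0) :
    ∃ X : E →L[𝕜] E, (∀ n, X (y n) = x n) ∧ ∀ k w, ⟪y k, X w⟫_𝕜 = 0 := by
  classical
  set Ix := hx.orthogonalFamily.linearIsometry
  set Iy := hy.orthogonalFamily.linearIsometry
  refine ⟨Ix.toContinuousLinearMap ∘L adjoint Iy.toContinuousLinearMap, fun n => ?_, fun k w => ?_⟩
  · have hIx : Ix (lp.single 2 n 1) = x n := by
      simp [Ix, hx.orthogonalFamily.linearIsometry_apply_single]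
    have hIy : Iy (lp.single 2 n 1) = y n := by
      simp [Iy, hy.orthogonalFamily.linearIsometry_apply_single]
    have hadj : adjoint Iy.toContinuousLinearMap (y n) = lp.single 2 n 1 := by
      rw [← hIy]; exact congr($(Iy.adjoint_comp_self) (lp.single 2 n (1 : 𝕜)))
    rw [comp_apply, hadj]
    exact hIx
  · have : adjoint Ix.toContinuousLinearMap (y k) = 0 := lp.ext <| funext fun n => by
      simp [Ix, hx.adjoint_linearIsometry_apply, inner_eq_zero_symm.mp (hyx k n)]
    rw [comp_apply, ← adjoint_inner_left, this, inner_zero_left]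

theorem exists_orthonormal_seq_inner_apply_triangular (T : E →L[𝕜] E)
    (hT : ∀ α : 𝕜,
      ¬ FiniteDimensional 𝕜 (LinearMap.range ((T - α • 1 : E →L[𝕜] E) : E →ₗ[𝕜] E))) :
    ∃ x y : ℕ → E, Orthonormal 𝕜 x ∧ Orthonormal 𝕜 y ∧ (∀ k n, ⟪y k, x n⟫_𝕜 = 0) ∧
      (∀ k n, k < n → ⟪y k, T (x n)⟫_𝕜 = 0) ∧ ∀ n, ⟪y n, T (x n)⟫_𝕜 ≠ 0 := by
  obtain ⟨f, hP, hr⟩ := exists_seq_of_forall_finset_exists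
    (fun p : E × E => ‖p.1‖ = 1 ∧ ‖p.2‖ = 1 ∧ ⟪p.1, p.2⟫_𝕜 = 0 ∧ ⟪p.2, T p.1⟫_𝕜 ≠ 0)
    (fun p q => ⟪p.1, q.1⟫_𝕜 = 0 ∧ ⟪p.2, q.2⟫_𝕜 = 0 ∧ ⟪p.1, q.2⟫_𝕜 = 0 ∧ ⟪p.2, q.1⟫_𝕜 = 0 ∧
      ⟪p.2, T q.1⟫_𝕜 = 0)
    fun s _ => by
      let K := span 𝕜 (⋃ p ∈ s, {p.1, p.2, adjoint T p.2})
      have : FiniteDimensional 𝕜 K :=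
        FiniteDimensional.span_of_finite 𝕜 (s.finite_toSet.biUnion fun _ _ => Set.toFinite _)
      obtain ⟨x, y, hx, hy, hx1, hy1, hxy, hyTx⟩ := exists_orthonormal_pair_mem_orthogonal T hT K
      refine ⟨(x, y), ⟨hx1, hy1, hxy, hyTx⟩, fun p hp => ?_⟩
      have hK : ∀ v ∈ ({p.1, p.2, adjoint T p.2} : Set E), v ∈ K :=
        fun v hv => subset_span (Set.mem_biUnion hp hv)
      refine ⟨inner_right_of_mem_orthogonal (hK _ (by simp)) hx,
        inner_right_of_mem_orthogonal (hK _ (by simp)) hy,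
        inner_right_of_mem_orthogonal (hK _ (by simp)) hy,
        inner_right_of_mem_orthogonal (hK _ (by simp)) hx, ?_⟩
      rw [← adjoint_inner_left]
      exact inner_right_of_mem_orthogonal (hK _ (by simp)) hx
  refine ⟨fun n => (f n).1, fun n => (f n).2, ⟨fun n => (hP n).1, ?_⟩, ⟨fun n => (hP n).2.1, ?_⟩,
    fun k n => ?_, fun k n h => (hr k n h).2.2.2.2, fun n => (hP n).2.2.2⟩
  · exact fun i j hij => hij.lt_or_gt.elim (fun h => (hr i j h).1)
      fun h => inner_eq_zero_symm.mp (hr j i h).1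
  · exact fun i j hij => hij.lt_or_gt.elim (fun h => (hr i j h).2.1)
      fun h => inner_eq_zero_symm.mp (hr j i h).2.1
  · rcases lt_trichotomy k n with h | rfl | h
    · exact (hr k n h).2.2.2.1
    · exact inner_eq_zero_symm.mp (hP k).2.2.1
    · exact inner_eq_zero_symm.mp (hr n k h).2.2.1

theorem exists_not_finiteDimensional_range_commutator (T : E →L[𝕜] E)
    (hT : ∀ α : 𝕜,
      ¬ FiniteDimensional 𝕜 (LinearMap.range ((T - α • 1 : E →L[𝕜] E) : E →ₗ[𝕜] E))) :
    ∃ X : E →L[𝕜] E,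
      ¬ FiniteDimensional 𝕜 (LinearMap.range ((T * X - X * T : E →L[𝕜] E) : E →ₗ[𝕜] E)) := by
  obtain ⟨x, y, hx, hy, hyx, htri, hdiag⟩ := exists_orthonormal_seq_inner_apply_triangular T hT
  obtain ⟨X, hXy, hX⟩ := exists_apply_orthonormal_eq_and_inner_eq_zero hx hy hyx
  refine ⟨X, fun hfin => ?_⟩
  set C := ((T * X - X * T : E →L[𝕜] E) : E →ₗ[𝕜] E)
  have hC : ∀ k n, ⟪y k, C (y n)⟫_𝕜 = ⟪y k, T (x n)⟫_𝕜 := fun k n => by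
    simp [C, inner_sub_right, hXy, hX]
  have hli : LinearIndependent 𝕜 (fun n => C.rangeRestrict (y n)) :=
    LinearIndependent.of_comp (LinearMap.range C).subtype <|
      linearIndependent_of_triangular (fun k => innerₛₗ 𝕜 (y k))
        (fun k n hkn => by simpa [hC] using htri k n hkn) (fun n => by simpa [hC] using hdiag n)
  exact Module.Finite.not_linearIndependent_of_infinite _ hli

end

theorem finite_rank_commutators_scalar_plus_finite_rank_general
    {H : Type*} [NormedAddCommGroup H] [InnerProductSpace ℂ H] [CompleteSpace H]
    (T : H →L[ℂ] H)
    (h : ∀ X : H →L[ℂ] H, FiniteDimensional ℂ (LinearMap.range ((T * X - X * T : H →L[ℂ] H) : H →ₗ[ℂ] H))) :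
    ∃ (α : ℂ) (H₀ : H →L[ℂ] H),
      FiniteDimensional ℂ (LinearMap.range (H₀ : H →ₗ[ℂ] H)) ∧ T = α • (1 : H →L[ℂ] H) + H₀ := by
  by_contra! hcon
  obtain ⟨X, hX⟩ := exists_not_finiteDimensional_range_commutator T fun α hα =>
    hcon α _ hα (add_sub_cancel _ _).symm
  exact hX (h X)

/-- If `T` is a bounded operator on a separable Hilbert space such that
`T X - X T` has finite rank for every bounded `X`, then `T = α I + H₀` for
some scalar `α` and finite-rank operator `H₀`. -/
theorem finite_rank_commutators_scalar_plus_finite_rank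
    {H : Type*} [NormedAddCommGroup H] [InnerProductSpace ℂ H] [CompleteSpace H]
    [TopologicalSpace.SeparableSpace H]
    (T : H →L[ℂ] H)
    (h : ∀ X : H →L[ℂ] H, FiniteDimensional ℂ (LinearMap.range ((T * X - X * T : H →L[ℂ] H) : H →ₗ[ℂ] H))) :
    ∃ (α : ℂ) (H₀ : H →L[ℂ] H),
      FiniteDimensional ℂ (LinearMap.range (H₀ : H →ₗ[ℂ] H)) ∧ T = α • (1 : H →L[ℂ] H) + H₀ :=
  finite_rank_commutators_scalar_plus_finite_rank_general T h
end

section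
/- Let A and B be bounded operators on Hilbert spaces H and K respectively with σ(A) ∩ σ(B) = ∅. Then the only bounded operator X : H → K (equivalently X ∈ B(H,K)) satisfying B X = X A is X = 0. -/
/-!
If `B X = X A`, then `X` intertwines `z - A` with `z - B`, so `z ↦ X (z - A)⁻¹` on `ρ(A)` and
`z ↦ (z - B)⁻¹ X` on `ρ(B)` agree where both are defined. When `σ(A) ∩ σ(B) = ∅` they glue to an
entire function tending to `0` at infinity, which vanishes by Liouville's theorem. Hence
`X = X (z - A)⁻¹ (z - A) = 0` for any `z ∈ ρ(A)`.
-/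

open Filter Topology spectrum

namespace ContinuousLinearMap

section NormedField

variable {𝕜 E F : Type*} [NormedField 𝕜] [NormedAddCommGroup E] [NormedSpace 𝕜 E]
  [NormedAddCommGroup F] [NormedSpace 𝕜 F]

theorem algebraMap_sub_comp_eq_comp_algebraMap_sub {A : E →L[𝕜] E} {B : F →L[𝕜] F}
    {X : E →L[𝕜] F} (hX : B ∘L X = X ∘L A) (z : 𝕜) :
    (algebraMap 𝕜 _ z - B) ∘L X = X ∘L (algebraMap 𝕜 _ z - A) := by
  simp [sub_comp, comp_sub, hX, Algebra.algebraMap_eq_smul_one, smul_comp, one_def]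

theorem resolvent_comp_eq_comp_resolvent {A : E →L[𝕜] E} {B : F →L[𝕜] F}
    {X : E →L[𝕜] F} (hX : B ∘L X = X ∘L A) {z : 𝕜} (hA : z ∈ resolventSet 𝕜 A)
    (hB : z ∈ resolventSet 𝕜 B) :
    resolvent B z ∘L X = X ∘L resolvent A z := by
  obtain ⟨u, hu⟩ : IsUnit (algebraMap 𝕜 _ z - B) := hB
  obtain ⟨v, hv⟩ : IsUnit (algebraMap 𝕜 _ z - A) := hA
  have huv : ↑u ∘L X = X ∘L ↑v := hu ▸ hv ▸ algebraMap_sub_comp_eq_comp_algebraMap_sub hX z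
  rw [resolvent, resolvent, ← hu, ← hv, Ring.inverse_unit, Ring.inverse_unit]
  calc (↑u⁻¹ : F →L[𝕜] F) ∘L X = ↑u⁻¹ ∘L (X ∘L (↑v : E →L[𝕜] E)) ∘L ↑v⁻¹ := by
        rw [comp_assoc, ← mul_def _ (↑v⁻¹ : E →L[𝕜] E), v.mul_inv, one_def, comp_id]
    _ = ↑u⁻¹ ∘L ((↑u : F →L[𝕜] F) ∘L X) ∘L ↑v⁻¹ := by rw [huv]
    _ = X ∘L ↑v⁻¹ := by rw [← comp_assoc, ← comp_assoc, ← mul_def, u.inv_mul, one_def, id_comp]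

open Classical in
noncomputable def intertwinedResolvent (A : E →L[𝕜] E) (B : F →L[𝕜] F) (X : E →L[𝕜] F)
    (z : 𝕜) : E →L[𝕜] F :=
  if z ∈ resolventSet 𝕜 A then X ∘L resolvent A z else resolvent B z ∘L X

variable {A : E →L[𝕜] E} {B : F →L[𝕜] F} {X : E →L[𝕜] F} {z : 𝕜}

theorem intertwinedResolvent_of_mem_resolventSet_left (hA : z ∈ resolventSet 𝕜 A) :
    intertwinedResolvent A B X z = X ∘L resolvent A z :=
  if_pos hA

theorem intertwinedResolvent_of_mem_resolventSet_right (hX : B ∘L X = X ∘L A)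
    (hB : z ∈ resolventSet 𝕜 B) :
    intertwinedResolvent A B X z = resolvent B z ∘L X := by
  unfold intertwinedResolvent
  split_ifs with hA
  exacts [(resolvent_comp_eq_comp_resolvent hX hA hB).symm, rfl]

end NormedField

section Banach

variable {𝕜 E F : Type*} [NontriviallyNormedField 𝕜] [NormedAddCommGroup E] [NormedSpace 𝕜 E]
  [CompleteSpace E] [NormedAddCommGroup F] [NormedSpace 𝕜 F]
  {A : E →L[𝕜] E} {B : F →L[𝕜] F} {X : E →L[𝕜] F}

theorem tendsto_intertwinedResolvent_cobounded :
    Tendsto (intertwinedResolvent A B X) (Bornology.cobounded 𝕜) (𝓝 0) := by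
  have hR : Tendsto (fun z ↦ X ∘L resolvent A z) (Bornology.cobounded 𝕜) (𝓝 0) := by
    simpa [Function.comp_def] using
      ((compL 𝕜 E E F X).continuous.tendsto 0).comp (resolvent_tendsto_cobounded A)
  refine hR.congr' ?_
  filter_upwards [eventually_isUnit_resolvent A] with z hz
  exact (intertwinedResolvent_of_mem_resolventSet_left (isUnit_resolvent.mpr hz)).symm

variable [CompleteSpace F]

theorem differentiable_intertwinedResolvent (hX : B ∘L X = X ∘L A)
    (hAB : Disjoint (spectrum 𝕜 A) (spectrum 𝕜 B)) :
    Differentiable 𝕜 (intertwinedResolvent A B X) := by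
  intro z
  have hz : z ∈ resolventSet 𝕜 A ∨ z ∈ resolventSet 𝕜 B := by
    by_contra! h
    exact hAB.notMem_of_mem_left h.1 h.2
  rcases hz with hA | hB
  · refine ((differentiableAt_const X).clm_comp
      (hasDerivAt_resolvent_const_left hA).differentiableAt).congr_of_eventuallyEq ?_
    filter_upwards [(isOpen_resolventSet A).mem_nhds hA] with w hw
    exact intertwinedResolvent_of_mem_resolventSet_left hw
  · refine ((hasDerivAt_resolvent_const_left hB).differentiableAt.clm_comp
      (differentiableAt_const X)).congr_of_eventuallyEq ?_
    filter_upwards [(isOpen_resolventSet B).mem_nhds hB] with w hw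
    exact intertwinedResolvent_of_mem_resolventSet_right hX hw

end Banach

section Complex

variable {E F : Type*} [NormedAddCommGroup E] [NormedSpace ℂ E] [CompleteSpace E]
  [NormedAddCommGroup F] [NormedSpace ℂ F] [CompleteSpace F]
  {A : E →L[ℂ] E} {B : F →L[ℂ] F} {X : E →L[ℂ] F}

theorem intertwinedResolvent_eq_zero (hX : B ∘L X = X ∘L A)
    (hAB : Disjoint (spectrum ℂ A) (spectrum ℂ B)) (z : ℂ) :
    intertwinedResolvent A B X z = 0 := by
  refine (differentiable_intertwinedResolvent hX hAB).apply_eq_of_tendsto_cocompact z ?_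
  rw [← Metric.cobounded_eq_cocompact]
  exact tendsto_intertwinedResolvent_cobounded

theorem eq_zero_of_comp_eq_comp_of_disjoint_spectrum (hX : B ∘L X = X ∘L A)
    (hAB : Disjoint (spectrum ℂ A) (spectrum ℂ B)) : X = 0 := by
  obtain ⟨z, hz⟩ := (eventually_isUnit_resolvent (𝕜 := ℂ) A).exists
  have hXR : X ∘L resolvent A z = 0 := by
    rw [← intertwinedResolvent_of_mem_resolventSet_left (isUnit_resolvent.mpr hz),
      intertwinedResolvent_eq_zero hX hAB]
  obtain ⟨u, hu⟩ := hz
  calc X = X ∘L (↑u : E →L[ℂ] E) ∘L ↑u⁻¹ := by rw [← mul_def, u.mul_inv, one_def, comp_id]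
    _ = 0 := by rw [← comp_assoc, hu, hXR, zero_comp]

end Complex

end ContinuousLinearMap

/-- If `A ∈ B(H)` and `B ∈ B(K)` have disjoint spectra, then the only bounded
`X : H → K` with `B X = X A` is `X = 0`. -/
theorem rosenblum_disjoint_spectra_injective
    {H K : Type*} [NormedAddCommGroup H] [InnerProductSpace ℂ H] [CompleteSpace H]
    [NormedAddCommGroup K] [InnerProductSpace ℂ K] [CompleteSpace K]
    (A : H →L[ℂ] H) (B : K →L[ℂ] K)
    (hspec : spectrum ℂ A ∩ spectrum ℂ B = ∅)
    (X : H →L[ℂ] K) (hX : B.comp X = X.comp A) :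
    X = 0 :=
  ContinuousLinearMap.eq_zero_of_comp_eq_comp_of_disjoint_spectrum hX
    (Set.disjoint_iff_inter_eq_empty.mpr hspec)
end

section
/- Let T ∈ B(H) for an infinite-dimensional Hilbert space H, and suppose every closed half-space of H is almost-invariant for T (for every closed Y with dim Y = dim(H/Y) = ∞ there is a finite-dimensional M with T Y ⊆ Y + M). Then T = α I + F for some scalar α and finite-rank operator F. -/
/-!
Either some finite-dimensional `V` satisfies `T e ∈ V + ℂ e` for every `e ⊥ V`, or none does.

In the first case the compression of `T` to `Vᗮ` maps every vector to a multiple of itself, so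
it is a scalar `α`; then `T - α` sends `Vᗮ` into `V`, and its range lies in `V + (T - α) V`.

In the second case choose recursively `e n ⊥ V n` with `T (e n) ∉ V n + ℂ e n`, where `V n` is
spanned by the earlier `e i` and `T (e i)`, and let `f n` be the component of `T (e n)` orthogonal
to `V n + ℂ e n`. The closed span `Y` of the `e n` is a half-space, since the orthogonal family
`f` is orthogonal to it. The matrix `⟪f i, T (e j)⟫` is triangular with nonzero diagonal, and it
does not change when each `T (e j)` is replaced by its component in a subspace `M` with
`T Y ⊆ Y + M`; so these components are linearly independent, and `M` is infinite-dimensional.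
-/

section

open Submodule
open scoped InnerProductSpace

def AlmostInvariant {K E : Type*} [DivisionRing K] [AddCommGroup E] [Module K E]
    (T : E →ₗ[K] E) (Y : Submodule K E) : Prop :=
  ∃ M : Submodule K E, FiniteDimensional K M ∧ ∀ y ∈ Y, T y ∈ Y ⊔ M

def IsHalfSpace {K E : Type*} [DivisionRing K] [AddCommGroup E] [Module K E] [TopologicalSpace E]
    (Y : Submodule K E) : Prop :=
  IsClosed (Y : Set E) ∧ ¬ FiniteDimensional K Y ∧ ¬ FiniteDimensional K (E ⧸ Y)

theorem linearIndependent_of_lower_triangular {R M ι : Type*} [Ring R] [NoZeroDivisors R]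
    [AddCommGroup M] [Module R M] [LinearOrder ι] {v : ι → M} (φ : ι → M →ₗ[R] R)
    (h_lt : ∀ i j, j < i → φ i (v j) = 0) (h_diag : ∀ i, φ i (v i) ≠ 0) :
    LinearIndependent R v := by
  classical
  rw [linearIndependent_iff']
  by_contra! ⟨s, g, hsum, j, hj, hgj⟩
  set support := s.filter (g · ≠ 0)
  have hsupp : support.Nonempty := ⟨j, Finset.mem_filter.mpr ⟨hj, hgj⟩⟩
  set i := support.max' hsupp
  have hi : i ∈ s ∧ g i ≠ 0 := Finset.mem_filter.mp (support.max'_mem hsupp)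
  -- applying `φ i` to the relation kills every term but the one with the largest index
  have : g i * φ i (v i) = 0 := by
    have := congrArg (φ i) hsum
    rw [map_sum, Finset.sum_eq_single i] at this
    · simpa using this
    · intro k hk hki
      by_cases hgk : g k = 0
      · simp [hgk]
      have hk_le : k ≤ i := support.le_max' k (Finset.mem_filter.mpr ⟨hk, hgk⟩)
      simp [h_lt i k (lt_of_le_of_ne hk_le hki)]
    · exact fun h => absurd hi.1 h
  exact hi.2 ((mul_eq_zero.mp this).resolve_right (h_diag i))

theorem not_finiteDimensional_of_linearIndependent {K E ι : Type*} [DivisionRing K]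
    [AddCommGroup E] [Module K E] [Infinite ι] {v : ι → E} (hv : LinearIndependent K v)
    {M : Submodule K E} (hM : ∀ i, v i ∈ M) : ¬ FiniteDimensional K M := fun _ =>
  Module.Finite.not_linearIndependent_of_infinite (fun i => (⟨v i, hM i⟩ : M))
    (.of_comp M.subtype hv)

theorem not_finiteDimensional_quotient_of_linearIndependent {K E ι : Type*} [DivisionRing K]
    [AddCommGroup E] [Module K E] [Infinite ι] {v : ι → E} (hv : LinearIndependent K v)
    {Y : Submodule K E} (hY : Disjoint (span K (Set.range v)) Y) :
    ¬ FiniteDimensional K (E ⧸ Y) := fun _ =>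
  Module.Finite.not_linearIndependent_of_infinite _ (hv.map (by rwa [ker_mkQ]))

variable {𝕜 E : Type*} [RCLike 𝕜] [NormedAddCommGroup E] [InnerProductSpace 𝕜 E]

theorem exists_starProjection_orthogonal_apply_eq_smul (T : E →ₗ[𝕜] E) (V : Submodule 𝕜 E)
    [V.HasOrthogonalProjection] (hV : ∀ e ∈ Vᗮ, T e ∈ V ⊔ 𝕜 ∙ e) :
    ∃ α : 𝕜, ∀ e ∈ Vᗮ, Vᗮ.starProjection (T e) = α • e := by
  have h_line : ∀ e ∈ Vᗮ, ∃ c : 𝕜, Vᗮ.starProjection (T e) = c • e := by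
    intro e he
    obtain ⟨v, hv, w, hw, hvw⟩ := mem_sup.mp (hV e he)
    obtain ⟨c, rfl⟩ := mem_span_singleton.mp hw
    refine ⟨c, ?_⟩
    rw [← hvw, map_add, starProjection_orthogonal_apply_eq_zero hv, zero_add,
      starProjection_eq_self_iff.mpr (smul_mem _ c he)]
  let S : Vᗮ →ₗ[𝕜] Vᗮ := (Vᗮ.orthogonalProjectionOnto : E →ₗ[𝕜] Vᗮ) ∘ₗ T ∘ₗ Vᗮ.subtype
  obtain ⟨α, hα⟩ := S.exists_eq_smul_id_of_forall_notLinearIndependent fun e he => by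
    obtain ⟨c, hc⟩ := h_line e e.2
    refine (linearIndependent_fin2.mp (LinearIndependent.pair_symm_iff.mp he)).2 c ?_
    exact Subtype.ext hc.symm
  refine ⟨α, fun e he => ?_⟩
  exact congrArg Subtype.val (LinearMap.congr_fun hα ⟨e, he⟩)

theorem finiteDimensional_range_sub_smul_one (T : E →L[𝕜] E) (V : Submodule 𝕜 E)
    [FiniteDimensional 𝕜 V] (α : 𝕜) (hα : ∀ e ∈ Vᗮ, Vᗮ.starProjection (T e) = α • e) :
    FiniteDimensional 𝕜 (LinearMap.range ((T - α • 1 : E →L[𝕜] E) : E →ₗ[𝕜] E)) := by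
  set F : E →L[𝕜] E := T - α • 1
  suffices LinearMap.range (F : E →ₗ[𝕜] E) ≤ V.map (F : E →ₗ[𝕜] E) ⊔ V from
    finiteDimensional_of_le this
  rintro _ ⟨x, rfl⟩
  set w := Vᗮ.starProjection x
  have hFw : F w = V.starProjection (T w) := by
    have := V.starProjection_add_starProjection_orthogonal (T w)
    rw [hα w (starProjection_apply_mem _ _)] at this
    exact (eq_sub_of_add_eq this).symm
  have hx : F x = F (V.starProjection x) + F w := by
    rw [← map_add, V.starProjection_add_starProjection_orthogonal]
  change F x ∈ _
  rw [hx, hFw]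
  exact add_mem_sup (mem_map_of_mem (starProjection_apply_mem _ _)) (starProjection_apply_mem _ _)

theorem exists_eq_smul_one_add_finiteDimensional_range (T : E →L[𝕜] E) (V : Submodule 𝕜 E)
    [FiniteDimensional 𝕜 V] (hV : ∀ e ∈ Vᗮ, T e ∈ V ⊔ 𝕜 ∙ e) :
    ∃ (α : 𝕜) (F : E →L[𝕜] E),
      FiniteDimensional 𝕜 (LinearMap.range (F : E →ₗ[𝕜] E)) ∧ T = α • (1 : E →L[𝕜] E) + F := by
  obtain ⟨α, hα⟩ := exists_starProjection_orthogonal_apply_eq_smul (T : E →ₗ[𝕜] E) V hV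
  exact ⟨α, T - α • 1, finiteDimensional_range_sub_smul_one T V α hα, by abel⟩

theorem exists_mem_orthogonal_inner_ne_zero (U : Submodule 𝕜 E) [U.HasOrthogonalProjection]
    {x : E} (hx : x ∉ U) : ∃ f ∈ Uᗮ, x - f ∈ U ∧ ⟪f, x⟫_𝕜 ≠ 0 := by
  set f := x - U.starProjection x
  have hf : f ∈ Uᗮ := U.sub_starProjection_mem_orthogonal x
  have hxf : x - f ∈ U := by simp [f]
  refine ⟨f, hf, hxf, fun h => hx ?_⟩
  have hff : ⟪f, f⟫_𝕜 = 0 := by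
    have := inner_sub_right (𝕜 := 𝕜) f x (x - f)
    rwa [sub_sub_cancel, h, inner_left_of_mem_orthogonal hxf hf, sub_zero] at this
  rw [inner_self_eq_zero.mp hff, sub_zero] at hxf
  exact hxf

section spanChain

variable (T : E →ₗ[𝕜] E) (next : Submodule 𝕜 E → E)

def spanChain : ℕ → Submodule 𝕜 E
  | 0 => ⊥
  | n + 1 => spanChain n ⊔ 𝕜 ∙ next (spanChain n) ⊔ 𝕜 ∙ T (next (spanChain n))

instance (n : ℕ) : FiniteDimensional 𝕜 (spanChain T next n) := by
  induction n with
  | zero => exact finiteDimensional_bot 𝕜 E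
  | succ n ih => rw [spanChain]; infer_instance

theorem monotone_spanChain : Monotone (spanChain T next) :=
  monotone_nat_of_le_succ fun _ => le_sup_left.trans le_sup_left

variable {T next}

theorem sup_span_next_le_spanChain {i n : ℕ} (h : i < n) :
    spanChain T next i ⊔ 𝕜 ∙ next (spanChain T next i) ≤ spanChain T next n :=
  le_sup_left.trans (monotone_spanChain T next h)

theorem apply_next_mem_spanChain {i n : ℕ} (h : i < n) :
    T (next (spanChain T next i)) ∈ spanChain T next n :=
  monotone_spanChain T next h <| mem_sup_right <| mem_span_singleton_self _

end spanChain

theorem exists_triangular_of_forall_exists_apply_notMem (T : E →ₗ[𝕜] E)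
    (hT : ∀ V : Submodule 𝕜 E, FiniteDimensional 𝕜 V → ∃ e ∈ Vᗮ, T e ∉ V ⊔ 𝕜 ∙ e) :
    ∃ e f : ℕ → E, (∀ i j, ⟪f i, e j⟫_𝕜 = 0) ∧ Pairwise (fun i j => ⟪f i, f j⟫_𝕜 = 0) ∧
      (∀ i j, j < i → ⟪f i, T (e j)⟫_𝕜 = 0) ∧ ∀ i, ⟪f i, T (e i)⟫_𝕜 ≠ 0 := by
  choose! next h_orth h_not_mem using hT
  set V := spanChain T next
  set e : ℕ → E := fun n => next (V n)
  choose f hf_orth hf_sub hf_diag using fun n =>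
    exists_mem_orthogonal_inner_ne_zero (V n ⊔ 𝕜 ∙ e n) (h_not_mem (V n) inferInstance)
  have he_mem : ∀ {j i}, j ≤ i → e j ∈ V i ⊔ 𝕜 ∙ e i := by
    intro j i h
    rcases h.lt_or_eq with h | rfl
    · exact mem_sup_left (sup_span_next_le_spanChain h (mem_sup_right (mem_span_singleton_self _)))
    · exact mem_sup_right (mem_span_singleton_self _)
  have hf_mem : ∀ {i n}, i < n → f i ∈ V n := by
    intro i n h
    have := sub_mem (apply_next_mem_spanChain h) (sup_span_next_le_spanChain h (hf_sub i))
    rwa [sub_sub_cancel] at this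
  refine ⟨e, f, fun i j => ?_, fun i j hij => ?_, fun i j h => ?_, hf_diag⟩
  · rcases lt_or_ge i j with h | h
    · exact inner_right_of_mem_orthogonal (hf_mem h) (h_orth _ inferInstance)
    · exact inner_left_of_mem_orthogonal (he_mem h) (hf_orth i)
  · rcases hij.lt_or_gt with h | h
    · exact inner_right_of_mem_orthogonal (mem_sup_left (hf_mem h)) (hf_orth j)
    · exact inner_left_of_mem_orthogonal (mem_sup_left (hf_mem h)) (hf_orth i)
  · exact inner_left_of_mem_orthogonal (mem_sup_left (apply_next_mem_spanChain h)) (hf_orth i)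

theorem not_almostInvariant_of_triangular (T : E →ₗ[𝕜] E) {Y : Submodule 𝕜 E} {e f : ℕ → E}
    (he : ∀ j, e j ∈ Y) (hf : ∀ i, f i ∈ Yᗮ) (h_lt : ∀ i j, j < i → ⟪f i, T (e j)⟫_𝕜 = 0)
    (h_diag : ∀ i, ⟪f i, T (e i)⟫_𝕜 ≠ 0) : ¬ AlmostInvariant T Y := by
  rintro ⟨M, hM, hTY⟩
  choose y hy m hm hym using fun j => mem_sup.mp (hTY (e j) (he j))
  have h_inner : ∀ i j, ⟪f i, m j⟫_𝕜 = ⟪f i, T (e j)⟫_𝕜 := by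
    intro i j
    rw [← hym, inner_add_right, inner_left_of_mem_orthogonal (hy j) (hf i), zero_add]
  refine not_finiteDimensional_of_linearIndependent ?_ hm hM
  exact linearIndependent_of_lower_triangular (fun i => innerₛₗ 𝕜 (f i))
    (by simpa [h_inner] using h_lt) (by simpa [h_inner] using h_diag)

theorem exists_isHalfSpace_not_almostInvariant (T : E →ₗ[𝕜] E)
    (hT : ∀ V : Submodule 𝕜 E, FiniteDimensional 𝕜 V → ∃ e ∈ Vᗮ, T e ∉ V ⊔ 𝕜 ∙ e) :
    ∃ Y : Submodule 𝕜 E, IsHalfSpace Y ∧ ¬ AlmostInvariant T Y := by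
  obtain ⟨e, f, hfe, hff, h_lt, h_diag⟩ := exists_triangular_of_forall_exists_apply_notMem T hT
  set Y := (span 𝕜 (Set.range e)).topologicalClosure
  have he : ∀ j, e j ∈ Y := fun j => le_topologicalClosure _ (subset_span ⟨j, rfl⟩)
  have hfY : span 𝕜 (Set.range f) ≤ Yᗮ := by
    rw [orthogonal_closure]
    exact isOrtho_span.mpr (by rintro _ ⟨i, rfl⟩ _ ⟨j, rfl⟩; exact hfe i j)
  have he_ind : LinearIndependent 𝕜 e :=
    (linearIndependent_of_lower_triangular (fun i => innerₛₗ 𝕜 (f i)) (by simpa using h_lt)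
      (by simpa using h_diag)).of_comp T
  have hf_ind : LinearIndependent 𝕜 f :=
    linearIndependent_of_ne_zero_of_inner_eq_zero
      (fun i h => h_diag i (by rw [h, inner_zero_left])) hff
  refine ⟨Y, ⟨isClosed_topologicalClosure _, not_finiteDimensional_of_linearIndependent he_ind he,
    not_finiteDimensional_quotient_of_linearIndependent hf_ind
      ((orthogonal_disjoint Y).symm.mono_left hfY)⟩,
    not_almostInvariant_of_triangular T he (fun i => hfY (subset_span ⟨i, rfl⟩)) h_lt h_diag⟩

end

theorem all_half_spaces_almost_invariant_implies_scalar_plus_finite_rank_general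
    {H : Type*} [NormedAddCommGroup H] [InnerProductSpace ℂ H] (T : H →L[ℂ] H)
    (h : ∀ Y : Submodule ℂ H, IsClosed (Y : Set H) →
      ¬ FiniteDimensional ℂ Y → ¬ FiniteDimensional ℂ (H ⧸ Y) →
      ∃ M : Submodule ℂ H, FiniteDimensional ℂ M ∧ ∀ y ∈ Y, T y ∈ Y ⊔ M) :
    ∃ (α : ℂ) (F : H →L[ℂ] H),
      FiniteDimensional ℂ (LinearMap.range (F : H →ₗ[ℂ] H)) ∧ T = α • (1 : H →L[ℂ] H) + F := by
  by_cases hT : ∃ V : Submodule ℂ H, FiniteDimensional ℂ V ∧ ∀ e ∈ Vᗮ, T e ∈ V ⊔ ℂ ∙ e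
  · obtain ⟨V, hV, hTV⟩ := hT
    exact exists_eq_smul_one_add_finiteDimensional_range T V hTV
  · push Not at hT
    obtain ⟨Y, ⟨hY_closed, hY_inf, hY_coinf⟩, hY⟩ :=
      exists_isHalfSpace_not_almostInvariant (T : H →ₗ[ℂ] H) hT
    exact absurd (h Y hY_closed hY_inf hY_coinf) hY

/-- If every closed half-space of an infinite-dimensional Hilbert space `H` is
almost-invariant for `T ∈ B(H)`, then `T = α I + F` for some scalar `α` and
finite-rank operator `F`. -/
theorem all_half_spaces_almost_invariant_implies_scalar_plus_finite_rank
    {H : Type*} [NormedAddCommGroup H] [InnerProductSpace ℂ H] [CompleteSpace H]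
    (hH : ¬ FiniteDimensional ℂ H) (T : H →L[ℂ] H)
    (h : ∀ Y : Submodule ℂ H, IsClosed (Y : Set H) →
      ¬ FiniteDimensional ℂ Y → ¬ FiniteDimensional ℂ (H ⧸ Y) →
      ∃ M : Submodule ℂ H, FiniteDimensional ℂ M ∧ ∀ y ∈ Y, T y ∈ Y ⊔ M) :
    ∃ (α : ℂ) (F : H →L[ℂ] H),
      FiniteDimensional ℂ (LinearMap.range (F : H →ₗ[ℂ] H)) ∧ T = α • (1 : H →L[ℂ] H) + F :=
  all_half_spaces_almost_invariant_implies_scalar_plus_finite_rank_general T h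
end
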